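/- Sequential-randomization reduction used in the recursive blipping proof: for every t = 1,…,T−1 and every fixed partial sequence z̄_t ∈ 𝒵^t, the composite control potential outcome Y(Z̄_t, z̲_{t+1}⁰), defined by ω ↦ Y(Z̄_t(ω), z⁰,…,z⁰)(ω), satisfies almost surely 𝔼[ Y(Z̄_t, z̲_{t+1}⁰) | σ(Z̄_{t+1}, X̄_t) ] = 𝔼[ Y(Z̄_t, z̲_{t+1}⁰) | 𝓖_t ]; that is, conditioning additionally on the next treatment Z_{t+1} does not change the conditional mean of the composite control potential outcome given the history 𝓖_t = σ(Z̄_t, X̄_t). -/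

import Mathlib

/-! On each event `{Z̄ₜ = z̄ₜ}`, which lies in `𝓖ₜ`, the composite outcome is the fixed-sequence
potential outcome `Y(z̄ₜ, z̲ₜ₊₁⁰)`, so both conditional expectations may be computed fibrewise.
For a fixed integrable `Y`, conditional independence of `Z_{t+1}` and `Y` given `𝓖ₜ` means that
`Z_{t+1}` and `Y` are independent under almost every regular conditional law given `𝓖ₜ`. Hence
`𝔼[1{Z_{t+1} ∈ B} Y | 𝓖ₜ] = ℙ(Z_{t+1} ∈ B | 𝓖ₜ) 𝔼[Y | 𝓖ₜ]`, so `𝔼[Y | 𝓖ₜ]` has the integrals of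
`Y` over the π-system of sets `s ∩ {Z_{t+1} ∈ B}`, `s ∈ 𝓖ₜ`, which generates `𝓖ₜ ∨ σ(Z_{t+1})`. -/

open MeasureTheory ProbabilityTheory

noncomputable section

/-- The σ-algebra generated by the treatments `Z 1, …, Z a` and the features `X 0, …, X b`.
With this notation, `σ(Z̄ₜ₊₁, X̄ₜ) = histSigma Z X (t+1) t` and `𝓖 t = histSigma Z X t t`. -/
def histSigma {Ω 𝒵 : Type*} [MeasurableSpace 𝒵] {d : ℕ}
    (Z : ℕ → Ω → 𝒵) (X : ℕ → Ω → Fin d → ℝ) (a b : ℕ) : MeasurableSpace Ω :=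
  (⨆ s ∈ Finset.Icc 1 a, MeasurableSpace.comap (Z s) inferInstance) ⊔
  (⨆ s ∈ Finset.Icc 0 b, MeasurableSpace.comap (X s) inferInstance)

/-- The length-`T` treatment sequence `(Z̄ₜ(ω), z̲ₜ₊₁⁰)` that agrees with the realized
treatments through time `t` and equals the control `z0` from time `t+1` onward
(coordinate `i : Fin T` corresponds to time `i + 1`). -/
def padCtrl {Ω 𝒵 : Type*} (Z : ℕ → Ω → 𝒵) (z0 : 𝒵) (T t : ℕ) (ω : Ω) : Fin T → 𝒵 :=
  fun i => if (i : ℕ) + 1 ≤ t then Z ((i : ℕ) + 1) ω else z0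

open MeasurableSpace

namespace MeasurableSpace
variable {Ω : Type*} (m₁ m₂ : MeasurableSpace Ω)

lemma sup_eq_generateFrom_image2_inter : m₁ ⊔ m₂ =
    generateFrom (Set.image2 (· ∩ ·) {s | MeasurableSet[m₁] s} {t | MeasurableSet[m₂] t}) := by
  refine le_antisymm (sup_le (fun s hs ↦ ?_) (fun t ht ↦ ?_)) (generateFrom_le ?_)
  · exact measurableSet_generateFrom ⟨s, hs, Set.univ, @MeasurableSet.univ _ m₂, Set.inter_univ s⟩
  · exact measurableSet_generateFrom ⟨Set.univ, @MeasurableSet.univ _ m₁, t, ht, Set.univ_inter t⟩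
  · rintro _ ⟨s, hs, t, ht, rfl⟩
    exact (le_sup_left (b := m₂) s hs).inter (le_sup_right (a := m₁) t ht)

lemma isPiSystem_image2_inter :
    IsPiSystem (Set.image2 (· ∩ ·) {s | MeasurableSet[m₁] s} {t | MeasurableSet[m₂] t}) := by
  rintro _ ⟨s, hs, t, ht, rfl⟩ _ ⟨s', hs', t', ht', rfl⟩ _
  exact ⟨s ∩ s', hs.inter hs', t ∩ t', ht.inter ht', (Set.inter_inter_inter_comm s t s' t').symm⟩

end MeasurableSpace

lemma MeasureTheory.setIntegral_eq_of_isPiSystem {Ω : Type*} {m : MeasurableSpace Ω}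
    [mΩ : MeasurableSpace Ω] {μ : Measure Ω} {f g : Ω → ℝ} (hm : m ≤ mΩ) {C : Set (Set Ω)}
    (hgen : m = generateFrom C) (hC : IsPiSystem C) (hf : Integrable f μ) (hg : Integrable g μ)
    (h_univ : ∫ x, f x ∂μ = ∫ x, g x ∂μ) (h_basic : ∀ s ∈ C, ∫ x in s, f x ∂μ = ∫ x in s, g x ∂μ)
    {s : Set Ω} (hs : MeasurableSet[m] s) : ∫ x in s, f x ∂μ = ∫ x in s, g x ∂μ := by
  induction s, hs using induction_on_inter hgen hC with
  | empty => simp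
  | basic s hs => exact h_basic s hs
  | compl s hs ih =>
    rw [setIntegral_compl (hm s hs) hf, setIntegral_compl (hm s hs) hg, ih, h_univ]
  | iUnion s hdisj hs ih =>
    rw [integral_iUnion (fun i ↦ hm _ (hs i)) hdisj hf.integrableOn,
      integral_iUnion (fun i ↦ hm _ (hs i)) hdisj hg.integrableOn]
    exact tsum_congr ih

namespace ProbabilityTheory.CondIndepFun

variable {Ω β : Type*} {m : MeasurableSpace Ω} [mΩ : MeasurableSpace Ω] [StandardBorelSpace Ω]
  {μ : Measure Ω} [IsFiniteMeasure μ] {hm : m ≤ mΩ} [mβ : MeasurableSpace β]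

lemma ae_indepFun_condExpKernel {γ : Type*} [MeasurableSpace γ]
    [CountableOrCountablyGenerated Ω (β × γ)]
    {f : Ω → β} {g : Ω → γ} (hf : Measurable f) (hg : Measurable g)
    (h : CondIndepFun m hm f g μ) :
    ∀ᵐ ω ∂μ, IndepFun f g (condExpKernel μ m ω) := by
  have hmap := ae_of_ae_trim hm ((condIndepFun_iff_map_prod_eq_prod_map_map hf hg).1 h)
  filter_upwards [hmap] with ω hω
  rw [indepFun_iff_map_prod_eq_prod_map_map hf.aemeasurable hg.aemeasurable]
  simpa [Kernel.map_apply _ (hf.prodMk hg), Kernel.map_apply _ hf, Kernel.map_apply _ hg,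
    Kernel.prod_apply] using hω

variable [CountableOrCountablyGenerated Ω (β × ℝ)] {W : Ω → β} {f : Ω → ℝ}

lemma condExp_indicator_preimage (h : CondIndepFun m hm W f μ) (hW : Measurable W)
    (hf : Measurable f) (hfi : Integrable f μ) {B : Set β} (hB : MeasurableSet B) :
    μ[(W ⁻¹' B).indicator f | m] =ᵐ[μ] μ⟦W ⁻¹' B | m⟧ * μ[f | m] := by
  have hA : MeasurableSet (W ⁻¹' B) := hW hB
  have hB1 : Measurable (B.indicator (1 : β → ℝ)) := measurable_const.indicator hB
  filter_upwards [condExp_ae_eq_integral_condExpKernel hm (hfi.indicator hA),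
    condExp_ae_eq_integral_condExpKernel hm hfi, condExpKernel_ae_eq_condExp hm hA,
    hfi.condExpKernel_ae (m := m), h.ae_indepFun_condExpKernel hW hf]
    with ω hAf hf' hA' hfi' hind
  have hone : B.indicator 1 ∘ W = (W ⁻¹' B).indicator (1 : Ω → ℝ) := by
    ext ω; by_cases hω : W ω ∈ B <;> simp [hω]
  have hind' : IndepFun (B.indicator 1 ∘ W) f (condExpKernel μ m ω) :=
    hind.comp hB1 measurable_id
  have hprod : (W ⁻¹' B).indicator f = (B.indicator 1 ∘ W) * f := by
    ext ω; by_cases hω : W ω ∈ B <;> simp [hω]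
  rw [hAf, Pi.mul_apply, hf', ← hA', hprod, hind'.integral_mul_eq_mul_integral
    (hB1.comp hW).aestronglyMeasurable hfi'.aestronglyMeasurable, hone, integral_indicator_one hA]

lemma condExp_sup_comap (h : CondIndepFun m hm W f μ) (hW : Measurable W) (hf : Measurable f)
    (hfi : Integrable f μ) : μ[f | m ⊔ mβ.comap W] =ᵐ[μ] μ[f | m] := by
  have hsup : m ⊔ mβ.comap W ≤ mΩ := sup_le hm hW.comap_le
  have h_basic : ∀ s, MeasurableSet[m] s → ∀ B, MeasurableSet B →
      ∫ x in s ∩ W ⁻¹' B, (μ[f | m]) x ∂μ = ∫ x in s ∩ W ⁻¹' B, f x ∂μ := by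
    intro s hs B hB
    have hA : MeasurableSet (W ⁻¹' B) := hW hB
    have hpull : μ[(W ⁻¹' B).indicator (μ[f | m]) | m] =ᵐ[μ] μ⟦W ⁻¹' B | m⟧ * μ[f | m] := by
      have hmul : (W ⁻¹' B).indicator (μ[f | m]) = μ[f | m] * (W ⁻¹' B).indicator 1 := by
        ext x; by_cases hx : x ∈ W ⁻¹' B <;> simp [hx]
      rw [hmul]
      exact (condExp_mul_of_stronglyMeasurable_left stronglyMeasurable_condExp
        (hmul ▸ integrable_condExp.indicator hA) ((integrable_const 1).indicator hA)).trans
        (.of_eq (mul_comm _ _))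
    calc ∫ x in s ∩ W ⁻¹' B, (μ[f | m]) x ∂μ
        = ∫ x in s, (μ[(W ⁻¹' B).indicator (μ[f | m]) | m]) x ∂μ := by
          rw [setIntegral_condExp hm (integrable_condExp.indicator hA) hs, setIntegral_indicator hA]
      _ = ∫ x in s, (μ[(W ⁻¹' B).indicator f | m]) x ∂μ :=
          setIntegral_congr_ae (hm s hs) (by
            filter_upwards [hpull, h.condExp_indicator_preimage hW hf hfi hB] with x h₁ h₂ _
            rw [h₁, h₂])
      _ = ∫ x in s ∩ W ⁻¹' B, f x ∂μ := by
          rw [setIntegral_condExp hm (hfi.indicator hA) hs, setIntegral_indicator hA]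
  have hsm : StronglyMeasurable[m ⊔ mβ.comap W] (μ[f | m]) :=
    stronglyMeasurable_condExp.mono le_sup_left
  refine (ae_eq_condExp_of_forall_setIntegral_eq hsup hfi
    (fun _ _ _ ↦ integrable_condExp.integrableOn) (fun s hs _ ↦ ?_)
    hsm.aestronglyMeasurable).symm
  refine setIntegral_eq_of_isPiSystem hsup (sup_eq_generateFrom_image2_inter _ _)
    (isPiSystem_image2_inter _ _) integrable_condExp hfi (integral_condExp hm) ?_ hs
  rintro _ ⟨s, hs, _, ⟨B, hB, rfl⟩, rfl⟩
  exact h_basic s hs B hB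

end ProbabilityTheory.CondIndepFun

lemma sum_indicator_preimage_singleton_apply {Ω ι M : Type*} [Fintype ι] [AddCommMonoid M]
    (P : Ω → ι) (g : ι → Ω → M) (ω : Ω) :
    ∑ i, (P ⁻¹' {i}).indicator (g i) ω = g (P ω) ω := by
  classical
  simp [Set.indicator_apply, eq_comm (a := P ω)]

lemma MeasureTheory.condExp_apply_index_ae_eq {Ω ι : Type*} {m : MeasurableSpace Ω}
    [mΩ : MeasurableSpace Ω] {μ : Measure Ω} [Fintype ι] [MeasurableSpace ι]
    [MeasurableSingletonClass ι] (hm : m ≤ mΩ) {P : Ω → ι} (hP : Measurable[m] P)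
    {Y : ι → Ω → ℝ} (hY : ∀ i, Integrable (Y i) μ) :
    μ[fun ω ↦ Y (P ω) ω | m] =ᵐ[μ] fun ω ↦ (μ[Y (P ω) | m]) ω := by
  have hfib (i : ι) : MeasurableSet[m] (P ⁻¹' {i}) := hP (MeasurableSet.singleton i)
  have hsum : (fun ω ↦ Y (P ω) ω) = ∑ i, (P ⁻¹' {i}).indicator (Y i) := by
    ext ω; rw [Finset.sum_apply, sum_indicator_preimage_singleton_apply]
  rw [hsum]
  filter_upwards [condExp_finsetSum (s := .univ) (fun i _ ↦ (hY i).indicator (hm _ (hfib i))) m,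
    ae_all_iff.2 fun i ↦ condExp_indicator (hY i) (hfib i)] with ω hω hind
  rw [hω, Finset.sum_apply]
  simp only [hind]
  exact sum_indicator_preimage_singleton_apply P (fun i ↦ μ[Y i | m]) ω

section History

variable {Ω 𝒵 : Type*} [m𝒵 : MeasurableSpace 𝒵] {d : ℕ} (Z : ℕ → Ω → 𝒵) (X : ℕ → Ω → Fin d → ℝ)

lemma comap_le_histSigma {a s : ℕ} (b : ℕ) (hs : s ∈ Finset.Icc 1 a) :
    m𝒵.comap (Z s) ≤ histSigma Z X a b :=
  le_sup_of_le_left (le_iSup₂_of_le s hs le_rfl)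

lemma histSigma_add_one_left (a b : ℕ) :
    histSigma Z X (a + 1) b = histSigma Z X a b ⊔ m𝒵.comap (Z (a + 1)) := by
  simp only [histSigma, ← Finset.insert_Icc_right_eq_Icc_add_one (Nat.le_add_left 1 a),
    Finset.iSup_insert]
  ac_rfl

lemma measurable_padCtrl (z0 : 𝒵) (T t b : ℕ) :
    Measurable[histSigma Z X t b] (padCtrl Z z0 T t) := by
  refine @measurable_pi_lambda _ _ _ (histSigma Z X t b) _ _ fun i ↦ ?_
  unfold padCtrl
  split_ifs with hi
  · exact Measurable.of_comap_le (comap_le_histSigma Z X b (Finset.mem_Icc.2 ⟨by omega, hi⟩))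
  · exact measurable_const

end History

theorem sequential_randomization_reduction_general
    {Ω : Type*} [MeasurableSpace Ω] [StandardBorelSpace Ω]
    (μ : Measure Ω) [IsProbabilityMeasure μ]
    {𝒵 : Type*} [Fintype 𝒵] [MeasurableSpace 𝒵] [MeasurableSingletonClass 𝒵]
    (z0 : 𝒵) {d : ℕ} (T : ℕ)
    (Z : ℕ → Ω → 𝒵) (hZ : ∀ t, Measurable (Z t))
    (X : ℕ → Ω → Fin d → ℝ)
    (Ypot : (Fin T → 𝒵) → Ω → ℝ) (hYpot_int : ∀ zbar, Integrable (Ypot zbar) μ)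
    (hYpot_meas : ∀ zbar, Measurable (Ypot zbar))
    -- Sequential randomization: `Z_{t+1} ⫫ Y(z̄_T) | 𝓖ₜ` for `t = 1, …, T-1`
    (hGle : ∀ t, histSigma Z X t t ≤ ‹MeasurableSpace Ω›)
    (hseq : ∀ t, 1 ≤ t → t ≤ T - 1 → ∀ zbar : Fin T → 𝒵,
      CondIndepFun (histSigma Z X t t) (hGle t) (Z (t + 1)) (Ypot zbar) μ) :
    ∀ t, 1 ≤ t → t ≤ T - 1 →
      μ[fun ω => Ypot (padCtrl Z z0 T t ω) ω | histSigma Z X (t+1) t] =ᵐ[μ]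
        μ[fun ω => Ypot (padCtrl Z z0 T t ω) ω | histSigma Z X t t] := by
  intro t ht1 ht2
  have hsplit := histSigma_add_one_left Z X t t
  have hle : histSigma Z X (t + 1) t ≤ ‹MeasurableSpace Ω› :=
    hsplit ▸ sup_le (hGle t) (hZ (t + 1)).comap_le
  have hpad := measurable_padCtrl Z X z0 T t t
  have hfixed (v : Fin T → 𝒵) :
      μ[Ypot v | histSigma Z X (t + 1) t] =ᵐ[μ] μ[Ypot v | histSigma Z X t t] :=
    hsplit ▸ (hseq t ht1 ht2 v).condExp_sup_comap (hZ (t + 1)) (hYpot_meas v) (hYpot_int v)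
  calc μ[fun ω ↦ Ypot (padCtrl Z z0 T t ω) ω | histSigma Z X (t + 1) t]
      =ᵐ[μ] fun ω ↦ (μ[Ypot (padCtrl Z z0 T t ω) | histSigma Z X (t + 1) t]) ω :=
        condExp_apply_index_ae_eq hle (hpad.mono (hsplit ▸ le_sup_left) le_rfl) hYpot_int
    _ =ᵐ[μ] fun ω ↦ (μ[Ypot (padCtrl Z z0 T t ω) | histSigma Z X t t]) ω := by
        filter_upwards [ae_all_iff.2 hfixed] with ω hω using hω _
    _ =ᵐ[μ] μ[fun ω ↦ Ypot (padCtrl Z z0 T t ω) ω | histSigma Z X t t] :=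
        (condExp_apply_index_ae_eq (hGle t) hpad hYpot_int).symm

/-- **Sequential-randomization reduction** used in the recursive blipping proof: for every
`t = 1, …, T−1`, the composite control potential outcome `Y(Z̄ₜ, z̲ₜ₊₁⁰)`, i.e.
`ω ↦ Y(Z̄ₜ(ω), z⁰, …, z⁰)(ω)`, satisfies almost surely
`𝔼[Y(Z̄ₜ, z̲ₜ₊₁⁰) | σ(Z̄ₜ₊₁, X̄ₜ)] = 𝔼[Y(Z̄ₜ, z̲ₜ₊₁⁰) | 𝓖ₜ]`. -/
theorem sequential_randomization_reduction
    {Ω : Type*} [MeasurableSpace Ω] [StandardBorelSpace Ω] [Nonempty Ω]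
    (μ : Measure Ω) [IsProbabilityMeasure μ]
    {𝒵 : Type*} [Fintype 𝒵] [DecidableEq 𝒵] [MeasurableSpace 𝒵] [MeasurableSingletonClass 𝒵]
    (z0 : 𝒵) {d : ℕ} (T : ℕ) (hT : 1 ≤ T)
    (Z : ℕ → Ω → 𝒵) (hZ : ∀ t, Measurable (Z t))
    (X : ℕ → Ω → Fin d → ℝ) (hX : ∀ t, Measurable (X t))
    (Ypot : (Fin T → 𝒵) → Ω → ℝ) (hYpot_int : ∀ zbar, Integrable (Ypot zbar) μ)
    (hYpot_meas : ∀ zbar, Measurable (Ypot zbar))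
    -- Sequential randomization: `Z_{t+1} ⫫ Y(z̄_T) | 𝓖ₜ` for `t = 1, …, T-1`
    (hGle : ∀ t, histSigma Z X t t ≤ ‹MeasurableSpace Ω›)
    (hseq : ∀ t, 1 ≤ t → t ≤ T - 1 → ∀ zbar : Fin T → 𝒵,
      CondIndepFun (histSigma Z X t t) (hGle t) (Z (t + 1)) (Ypot zbar) μ) :
    ∀ t, 1 ≤ t → t ≤ T - 1 →
      μ[fun ω => Ypot (padCtrl Z z0 T t ω) ω | histSigma Z X (t+1) t] =ᵐ[μ]
        μ[fun ω => Ypot (padCtrl Z z0 T t ω) ω | histSigma Z X t t] :=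
  sequential_randomization_reduction_general μ z0 T Z hZ X Ypot hYpot_int hYpot_meas hGle hseq

end
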